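/- For density operators σ, ρ with supp σ ≤ supp ρ = p, the commutant Radon–Nikodym derivative d = ρ^{-1/2} σ ρ^{-1/2} is the unique element of pAp satisfying Tr(σ a) = Tr(ρ^{1/2} d ρ^{1/2} a) for all a ∈ A; moreover d ≥ 0, and ‖d‖ is the smallest λ ≥ 0 such that σ ≤ λρ. Consequently ‖d‖ ≥ 1, with equality if and only if σ = ρ. -/

import Mathlib

/-
With `S = ρ^{1/2}` invertible, `ρ = S * S` and `σ = S * d * S`: the trace identity is immediate,
uniqueness follows from nondegeneracy of the trace pairing, and congruence by `S` turns
`σ ≤ λ • ρ` into `d ≤ λ • 1`. The latter holds iff `λ` dominates every eigenvalue of `d`, so the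
least such `λ` is the top eigenvalue of `d ≥ 0`, i.e. `‖d‖`. Taking traces in `σ ≤ L • ρ` gives
`L ≥ 1`, and for `L = 1` the positive semidefinite matrix `ρ - σ` has trace zero, hence vanishes.
-/

open Matrix ComplexOrder

namespace Matrix.PosSemidef

/-- The positive semidefinite square root of a positive semidefinite matrix
(the definition `Matrix.PosSemidef.sqrt` of the older Mathlib, since removed). -/
noncomputable def sqrt {𝕜 : Type*} [RCLike 𝕜] {n : Type*} [Fintype n] [DecidableEq n]
    {A : Matrix n n 𝕜} (hA : A.PosSemidef) : Matrix n n 𝕜 :=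
  hA.1.eigenvectorUnitary.1 * diagonal ((↑) ∘ (√·) ∘ hA.1.eigenvalues) *
    (star hA.1.eigenvectorUnitary : Matrix n n 𝕜)

end Matrix.PosSemidef

namespace Matrix

variable {𝕜 n : Type*} [RCLike 𝕜] [Fintype n] [DecidableEq n]

namespace PosSemidef

variable {A : Matrix n n 𝕜} (hA : A.PosSemidef)
include hA

lemma posSemidef_sqrt : hA.sqrt.PosSemidef := by
  rw [sqrt, Matrix.star_eq_conjTranspose]
  refine (posSemidef_diagonal_iff.mpr fun i => ?_).mul_mul_conjTranspose_same _
  exact RCLike.ofReal_nonneg.mpr (Real.sqrt_nonneg _)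

lemma sqrt_mul_self : hA.sqrt * hA.sqrt = A := by
  conv_rhs => rw [hA.1.spectral_theorem, Unitary.conjStarAlgAut_apply]
  have hU : (star hA.1.eigenvectorUnitary : Matrix n n 𝕜) * hA.1.eigenvectorUnitary.1 = 1 :=
    Unitary.coe_star_mul_self _
  simp only [sqrt, mul_assoc]
  rw [← mul_assoc _ (hA.1.eigenvectorUnitary.1), hU, one_mul, ← mul_assoc (diagonal _),
    diagonal_mul_diagonal]
  congr 3
  funext i
  simp only [Function.comp_apply, ← RCLike.ofReal_mul,
    Real.mul_self_sqrt (hA.eigenvalues_nonneg i)]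

end PosSemidef

lemma PosDef.isUnit_sqrt {A : Matrix n n 𝕜} (hA : A.PosDef) : IsUnit hA.posSemidef.sqrt := by
  rw [isUnit_iff_isUnit_det]
  refine isUnit_of_mul_isUnit_left (y := hA.posSemidef.sqrt.det) ?_
  rw [← det_mul, hA.posSemidef.sqrt_mul_self, ← isUnit_iff_isUnit_det]
  exact hA.isUnit

lemma IsHermitian.posSemidef_mul_mul_self_iff {S x : Matrix n n 𝕜} (hS : S.IsHermitian)
    (hSu : IsUnit S) : (S * x * S).PosSemidef ↔ x.PosSemidef := by
  simpa only [star_eq_conjTranspose, hS.eq] using hSu.posSemidef_star_left_conjugate_iff (x := x)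

lemma IsHermitian.posSemidef_smul_mul_self_sub_iff {S x : Matrix n n 𝕜} (hS : S.IsHermitian)
    (hSu : IsUnit S) (lam : 𝕜) :
    (lam • (S * S) - S * x * S).PosSemidef ↔ (lam • 1 - x).PosSemidef := by
  rw [← hS.posSemidef_mul_mul_self_iff hSu (x := lam • 1 - x), mul_sub, sub_mul, mul_smul_one,
    smul_mul_assoc]

lemma IsHermitian.posSemidef_smul_one_sub_iff {A : Matrix n n 𝕜} (hA : A.IsHermitian) (μ : ℝ) :
    ((μ : 𝕜) • (1 : Matrix n n 𝕜) - A).PosSemidef ↔ ∀ i, hA.eigenvalues i ≤ μ := by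
  set U : Matrix n n 𝕜 := (hA.eigenvectorUnitary : Matrix n n 𝕜)
  have hdiag : (μ : 𝕜) • (1 : Matrix n n 𝕜) - A =
      U * diagonal (fun i => ((μ - hA.eigenvalues i : ℝ) : 𝕜)) * star U := by
    conv_lhs => rw [hA.spectral_theorem, Unitary.conjStarAlgAut_apply]
    have hD : diagonal (fun i => ((μ - hA.eigenvalues i : ℝ) : 𝕜)) =
        (μ : 𝕜) • 1 - diagonal ((↑) ∘ hA.eigenvalues) := by
      rw [smul_one_eq_diagonal, diagonal_sub]
      simp
    rw [hD, mul_sub, sub_mul, mul_smul_comm, mul_one, smul_mul_assoc,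
      Unitary.mul_star_self_of_mem hA.eigenvectorUnitary.2]
  rw [hdiag, Unitary.isUnit_coe.posSemidef_star_right_conjugate_iff, posSemidef_diagonal_iff]
  simp [sub_nonneg]

lemma IsHermitian.isLeast_posSemidef_smul_one_sub [Nonempty n] {A : Matrix n n 𝕜}
    (hA : A.IsHermitian) :
    IsLeast {μ : ℝ | ((μ : 𝕜) • (1 : Matrix n n 𝕜) - A).PosSemidef}
      (Finset.univ.sup' Finset.univ_nonempty hA.eigenvalues) := by
  simp only [IsLeast, lowerBounds, Set.mem_ofPred_eq, hA.posSemidef_smul_one_sub_iff]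
  exact ⟨fun i => Finset.le_sup' _ (Finset.mem_univ i),
    fun μ hμ => Finset.sup'_le _ _ fun i _ => hμ i⟩

omit [DecidableEq n] in
lemma one_le_of_posSemidef_smul_sub {ρ σ : Matrix n n 𝕜} (hρ1 : ρ.trace = 1)
    (hσ1 : σ.trace = 1) {lam : ℝ} (h : ((lam : 𝕜) • ρ - σ).PosSemidef) : 1 ≤ lam := by
  have htr := h.trace_nonneg
  rw [trace_sub, trace_smul, hρ1, hσ1, smul_eq_mul, mul_one, sub_nonneg] at htr
  exact_mod_cast htr

omit [DecidableEq n] in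
lemma eq_of_posSemidef_sub_of_trace_eq {ρ σ : Matrix n n 𝕜} (h : (ρ - σ).PosSemidef)
    (htr : ρ.trace = σ.trace) : σ = ρ := by
  rw [eq_comm, ← sub_eq_zero, ← h.trace_eq_zero_iff, trace_sub, htr, sub_self]

end Matrix

/-- For density operators `σ, ρ` with `ρ` invertible (so that
`supp σ ≤ supp ρ = 1`), the commutant Radon–Nikodym derivative
`d = ρ^{-1/2} σ ρ^{-1/2}` is the unique element satisfying
`Tr(σ a) = Tr(ρ^{1/2} d ρ^{1/2} a)` for all `a`; it is positive semidefinite,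
and its operator norm `L` (characterized as the least `μ` with `d ≤ μ•1`) is
the smallest `λ` with `σ ≤ λ•ρ`; moreover `L ≥ 1`, with `L = 1` iff `σ = ρ`. -/
theorem stmt13 {n : Type*} [Fintype n] [DecidableEq n]
    (ρ σ : Matrix n n ℂ) (hρ : ρ.PosDef) (hρ1 : ρ.trace = 1)
    (hσ : σ.PosSemidef) (hσ1 : σ.trace = 1)
    (d : Matrix n n ℂ)
    (hd : d = (hρ.posSemidef.sqrt)⁻¹ * σ * (hρ.posSemidef.sqrt)⁻¹) :
    (∀ a : Matrix n n ℂ,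
      (σ * a).trace = (hρ.posSemidef.sqrt * d * hρ.posSemidef.sqrt * a).trace) ∧
    (∀ d' : Matrix n n ℂ,
      (∀ a : Matrix n n ℂ,
        (σ * a).trace = (hρ.posSemidef.sqrt * d' * hρ.posSemidef.sqrt * a).trace) →
      d' = d) ∧
    d.PosSemidef ∧
    (∃ L : ℝ,
      IsLeast {lam : ℝ | ((lam : ℂ) • ρ - σ).PosSemidef} L ∧
      IsLeast {mu : ℝ | ((mu : ℂ) • (1 : Matrix n n ℂ) - d).PosSemidef} L ∧
      1 ≤ L ∧ (L = 1 ↔ σ = ρ)) := by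
  set S := hρ.posSemidef.sqrt
  have hSh : S.IsHermitian := hρ.posSemidef.posSemidef_sqrt.isHermitian
  have hSu : IsUnit S := hρ.isUnit_sqrt
  have hSS : S * S = ρ := hρ.posSemidef.sqrt_mul_self
  have hSdS : S * d * S = σ := by
    have hdet := (isUnit_iff_isUnit_det S).mp hSu
    rw [hd, ← mul_assoc, mul_nonsing_inv_cancel_left _ _ hdet,
      nonsing_inv_mul_cancel_right _ _ hdet]
  have hdpsd : d.PosSemidef := (hSh.posSemidef_mul_mul_self_iff hSu).mp (hSdS ▸ hσ)
  have hsets : {lam : ℝ | ((lam : ℂ) • ρ - σ).PosSemidef} =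
      {mu : ℝ | ((mu : ℂ) • (1 : Matrix n n ℂ) - d).PosSemidef} := by
    rw [← hSS, ← hSdS]
    exact Set.ext fun lam => hSh.posSemidef_smul_mul_self_sub_iff hSu lam
  refine ⟨fun a => by rw [hSdS], fun d' hd' => ?_, hdpsd, ?_⟩
  · rw [← hSu.mul_left_inj, ← hSu.mul_right_inj, ← mul_assoc, ← mul_assoc, hSdS,
      ext_iff_trace_mul_right]
    exact fun a => (hd' a).symm
  · have : Nonempty n := by
      by_contra h
      simp [not_nonempty_iff.mp h] at hρ1
    have hL := hsets ▸ hdpsd.isHermitian.isLeast_posSemidef_smul_one_sub (𝕜 := ℂ)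
    have h1L := one_le_of_posSemidef_smul_sub hρ1 hσ1 hL.1
    refine ⟨_, hL, hsets ▸ hL, h1L, fun hL1 => ?_, fun hσρ => ?_⟩
    · have h := hL.1
      rw [Set.mem_ofPred_eq, hL1, Complex.ofReal_one, one_smul] at h
      exact eq_of_posSemidef_sub_of_trace_eq h (hρ1.trans hσ1.symm)
    · refine le_antisymm (hL.2 ?_) h1L
      simp [hσρ, PosSemidef.zero]
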